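/- arXiv:2512.19968 — 6 statements merged into one kernel-verified Lean document; each statement's English description precedes it below -/
import Mathlib

section
/- (Disjoint seeds yield disjoint consistent DAGs.) Let ρ be a real number with 0 ≤ ρ ≤ 1/2, let all messages under consideration have strictly positive weight, and let (X_s)_{s≥0} and (Y_s)_{s≥0} be two consistent DAGs. If X_0 ∩ Y_0 = ∅, then X_s ∩ Y_s = ∅ for every s ≥ 0. Moreover, if there is a timestamp function ts from messages to natural numbers such that for every s ≥ 0 every message in X_s ∪ Y_s has timestamp s, then the unions ⋃_{s≥0} X_s and ⋃_{s≥0} Y_s are disjoint. -/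
/-- A message `m` is a *consistent successor* of a finite set `X` of messages if `X` is a
subset of `m`'s coffer and the weight of `X` is strictly more than a fraction `1 - ρ` of the
weight of `m`'s coffer. -/
def ConsistentSuccessor {M : Type*} (w : M → ℝ) (coffer : M → Finset M) (ρ : ℝ)
    (m : M) (X : Finset M) : Prop :=
  X ⊆ coffer m ∧ (1 - ρ) * ∑ x ∈ coffer m, w x < ∑ x ∈ X, w x

/-- A *consistent DAG* is a family `(X s)_{s ≥ 0}` of finite sets of messages such that every
member of `X (s+1)` is a consistent successor of `X s`; `X 0` is its seed. -/
def ConsistentDAG {M : Type*} (w : M → ℝ) (coffer : M → Finset M) (ρ : ℝ)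
    (X : ℕ → Finset M) : Prop :=
  ∀ s : ℕ, ∀ m ∈ X (s + 1), ConsistentSuccessor w coffer ρ m (X s)

/-- Disjoint seeds yield disjoint consistent DAGs: if two consistent DAGs (with `0 ≤ ρ ≤ 1/2`
and strictly positive weights) have disjoint seeds, they are levelwise disjoint; moreover,
if every message in `X s ∪ Y s` carries timestamp `s`, then the unions of the two DAGs
are disjoint. -/
theorem disjoint_seeds_disjoint_dags {M : Type*} [DecidableEq M]
    (w : M → ℝ) (coffer : M → Finset M) (ρ : ℝ) (hρ0 : 0 ≤ ρ) (hρ1 : ρ ≤ 1 / 2)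
    (hw : ∀ m : M, 0 < w m)
    (X Y : ℕ → Finset M)
    (hX : ConsistentDAG w coffer ρ X) (hY : ConsistentDAG w coffer ρ Y)
    (hseed : X 0 ∩ Y 0 = ∅) :
    (∀ s : ℕ, X s ∩ Y s = ∅) ∧
    (∀ ts : M → ℕ, (∀ s : ℕ, ∀ m ∈ X s ∪ Y s, ts m = s) →
      (⋃ s : ℕ, (X s : Set M)) ∩ (⋃ s : ℕ, (Y s : Set M)) = ∅) := by

  have hlevel : ∀ s : ℕ, X s ∩ Y s = ∅ := by
    intro s
    induction s with
    | zero => exact hseed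
    | succ n ih =>
      rw [Finset.eq_empty_iff_forall_notMem]
      intro m hm
      rw [Finset.mem_inter] at hm
      obtain ⟨hXc, hXw⟩ := hX n m hm.1
      obtain ⟨hYc, hYw⟩ := hY n m hm.2
      have hdisj : Disjoint (X n) (Y n) := Finset.disjoint_iff_inter_eq_empty.mpr ih
      have hsum : (∑ x ∈ X n, w x) + (∑ x ∈ Y n, w x) ≤ ∑ x ∈ coffer m, w x := by
        rw [← Finset.sum_union hdisj]
        exact Finset.sum_le_sum_of_subset_of_nonneg (Finset.union_subset hXc hYc)
          (fun i _ _ => (hw i).le)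
      have hW : (1 - ρ) * (∑ x ∈ coffer m, w x) + (1 - ρ) * (∑ x ∈ coffer m, w x)
          < (∑ x ∈ X n, w x) + (∑ x ∈ Y n, w x) := add_lt_add hXw hYw
      have hWpos : 0 ≤ ∑ x ∈ coffer m, w x :=
        Finset.sum_nonneg (fun i _ => (hw i).le)
      nlinarith
  refine ⟨hlevel, fun ts hts => ?_⟩
  ext m
  simp only [Set.mem_inter_iff, Set.mem_iUnion, Finset.mem_coe, Set.mem_empty_iff_false,
    iff_false, not_and]
  rintro ⟨s, hs⟩ ⟨t, ht⟩
  have h1 : ts m = s := hts s m (Finset.mem_union_left _ hs)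
  have h2 : ts m = t := hts t m (Finset.mem_union_right _ ht)
  have : m ∈ X s ∩ Y s := Finset.mem_inter.mpr ⟨hs, h1 ▸ h2 ▸ ht⟩
  rw [hlevel s] at this
  exact absurd this (Finset.notMem_empty m)
end

section
/- (Core of the Bootstrap-Sieve discard rule.) Let ρ be a real number with 0 ≤ ρ ≤ 1/2, let all messages under consideration have strictly positive weight, and let (X_s)_{s≥0} and (Y_s)_{s≥0} be two consistent DAGs with disjoint seeds (X_0 ∩ Y_0 = ∅) such that all but finitely many of the sets X_s and Y_s are empty, and such that there is a timestamp function ts with every message in X_s ∪ Y_s having timestamp s for every s ≥ 0. Let C = ⋃_{s≥0} X_s and C' = ⋃_{s≥0} Y_s, and let T be a finite set of messages with C ⊆ T, C' ⊆ T, and weight(C) > (1/2)·weight(T). Then weight(C') < weight(C). -/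
/-- Core of the Bootstrap-Sieve discard rule: given two consistent DAGs with disjoint seeds,
all levels eventually empty, and timestamps matching levels, if the union `C` of the first DAG
weighs strictly more than half of a finite set `T` containing both unions, then the union `C'`
of the second DAG weighs strictly less than `C`. -/
theorem bootstrap_sieve_discard {M : Type*} [DecidableEq M]
    (w : M → ℝ) (coffer : M → Finset M) (ρ : ℝ) (hρ0 : 0 ≤ ρ) (hρ1 : ρ ≤ 1 / 2)
    (hw : ∀ m : M, 0 < w m)
    (X Y : ℕ → Finset M)
    (hX : ConsistentDAG w coffer ρ X) (hY : ConsistentDAG w coffer ρ Y)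
    (hseed : X 0 ∩ Y 0 = ∅)
    (hfin : ∃ N : ℕ, ∀ s : ℕ, N ≤ s → X s = ∅ ∧ Y s = ∅)
    (ts : M → ℕ) (hts : ∀ s : ℕ, ∀ m ∈ X s ∪ Y s, ts m = s)
    (C C' T : Finset M)
    (hCdef : (C : Set M) = ⋃ s : ℕ, (X s : Set M))
    (hC'def : (C' : Set M) = ⋃ s : ℕ, (Y s : Set M))
    (hCT : C ⊆ T) (hC'T : C' ⊆ T)
    (hmaj : (1 / 2 : ℝ) * ∑ m ∈ T, w m < ∑ m ∈ C, w m) :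
    ∑ m ∈ C', w m < ∑ m ∈ C, w m := by
  -- Step 1: levels are disjoint at every stage.
  have hdisj : ∀ s : ℕ, X s ∩ Y s = ∅ := by
    intro s
    induction s with
    | zero => exact hseed
    | succ s ih =>
      by_contra h
      obtain ⟨m, hm⟩ := Finset.nonempty_iff_ne_empty.mpr h
      rw [Finset.mem_inter] at hm
      obtain ⟨hXsub, hXw⟩ := hX s m hm.1
      obtain ⟨hYsub, hYw⟩ := hY s m hm.2
      set W := ∑ x ∈ coffer m, w x with hW
      have hWnn : 0 ≤ W := Finset.sum_nonneg fun x _ => (hw x).le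
      have h1 : (1 / 2 : ℝ) * W ≤ (1 - ρ) * W := by nlinarith
      have hdXY : Disjoint (X s) (Y s) := Finset.disjoint_iff_inter_eq_empty.mpr ih
      have hsum : ∑ x ∈ X s, w x + ∑ x ∈ Y s, w x = ∑ x ∈ X s ∪ Y s, w x :=
        (Finset.sum_union hdXY).symm
      have hsub : X s ∪ Y s ⊆ coffer m := Finset.union_subset hXsub hYsub
      have hle : ∑ x ∈ X s ∪ Y s, w x ≤ W :=
        Finset.sum_le_sum_of_subset_of_nonneg hsub (fun x _ _ => (hw x).le)
      linarith
  -- Step 2: C and C' are disjoint.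
  have hCC' : Disjoint C C' := by
    rw [Finset.disjoint_left]
    intro m hmC hmC'
    have h1 : (m : M) ∈ ⋃ s : ℕ, (X s : Set M) := hCdef ▸ Finset.mem_coe.mpr hmC
    have h2 : (m : M) ∈ ⋃ s : ℕ, (Y s : Set M) := hC'def ▸ Finset.mem_coe.mpr hmC'
    obtain ⟨s, hs⟩ := Set.mem_iUnion.mp h1
    obtain ⟨t, ht⟩ := Set.mem_iUnion.mp h2
    have hs' : m ∈ X s := hs
    have ht' : m ∈ Y t := ht
    have hst : s = t := by
      have e1 : ts m = s := hts s m (Finset.mem_union_left _ hs')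
      have e2 : ts m = t := hts t m (Finset.mem_union_right _ ht')
      omega
    have : m ∈ X s ∩ Y s := Finset.mem_inter.mpr ⟨hs', hst ▸ ht'⟩
    simp [hdisj s] at this
  -- Step 3: conclude by weights.
  have hsum : ∑ m ∈ C, w m + ∑ m ∈ C', w m = ∑ m ∈ C ∪ C', w m :=
    (Finset.sum_union hCC').symm
  have hle : ∑ m ∈ C ∪ C', w m ≤ ∑ m ∈ T, w m :=
    Finset.sum_le_sum_of_subset_of_nonneg (Finset.union_subset hCT hC'T)
      (fun x _ _ => (hw x).le)
  linarith
end

section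
/- (Grade-1 chains are always compatible.) Let C be a finite set of messages and let L and L' be finite sets of messages, all messages of strictly positive weight, with C ⊆ L, C ⊆ L', weight(C) > (2/3)·weight(L), and weight(C) > (2/3)·weight(L'). If a chain Λ has grade 1 at L and a chain Λ' has grade 1 at L', then Λ and Λ' are compatible. -/
open scoped Classical

/-- The weight of the messages in `L` whose vote extends (has as a prefix) the chain `Λ`. -/
noncomputable def extWeight {Msg B : Type*} (w : Msg → ℝ) (vote : Msg → List B)
    (L : Finset Msg) (Λ : List B) : ℝ :=
  ∑ m ∈ L, if Λ <+: vote m then w m else 0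

/-- A chain `Λ` has grade 1 at `L` if the votes for extensions of `Λ` account for strictly
more than two thirds of the weight of `L`. -/
def Grade1 {Msg B : Type*} (w : Msg → ℝ) (vote : Msg → List B)
    (L : Finset Msg) (Λ : List B) : Prop :=
  (2 / 3 : ℝ) * ∑ m ∈ L, w m < extWeight w vote L Λ

/-- Grade-1 chains are always compatible: if `C` is contained in `L` and `L'` and accounts
for strictly more than two thirds of the weight of each, then any chain with grade 1 at `L`
and any chain with grade 1 at `L'` are compatible (one is a prefix of the other). -/
theorem grade1_chains_compatible {Msg B : Type*} [DecidableEq Msg]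
    (w : Msg → ℝ) (vote : Msg → List B) (hw : ∀ m : Msg, 0 < w m)
    (C L L' : Finset Msg) (hCL : C ⊆ L) (hCL' : C ⊆ L')
    (hC : (2 / 3 : ℝ) * ∑ m ∈ L, w m < ∑ m ∈ C, w m)
    (hC' : (2 / 3 : ℝ) * ∑ m ∈ L', w m < ∑ m ∈ C, w m)
    (Λ Λ' : List B)
    (h1 : Grade1 w vote L Λ) (h1' : Grade1 w vote L' Λ') :
    Λ <+: Λ' ∨ Λ' <+: Λ := by
  -- key bound: for any superset L of C with C heavy in L and Λ grade 1 at L,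
  -- the weight of messages in C voting extensions of Λ exceeds half of weight C.
  have key : ∀ (L : Finset Msg), C ⊆ L →
      (2 / 3 : ℝ) * ∑ m ∈ L, w m < ∑ m ∈ C, w m →
      ∀ Λ : List B, Grade1 w vote L Λ →
      (1 / 2 : ℝ) * ∑ m ∈ C, w m <
        ∑ m ∈ C.filter (fun m => Λ <+: vote m), w m := by
    intro L hCL hC Λ h1
    have hsplit : extWeight w vote L Λ =
        (∑ m ∈ C, if Λ <+: vote m then w m else 0) +
        ∑ m ∈ L \ C, if Λ <+: vote m then w m else 0 := by
      rw [extWeight, ← Finset.sum_sdiff hCL, add_comm]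
    have h2 : (∑ m ∈ L \ C, if Λ <+: vote m then w m else 0) ≤
        ∑ m ∈ L \ C, w m := by
      apply Finset.sum_le_sum
      intro m _
      split <;> [exact le_rfl; exact (hw m).le]
    have h3 : ∑ m ∈ L \ C, w m = (∑ m ∈ L, w m) - ∑ m ∈ C, w m := by
      rw [eq_sub_iff_add_eq, Finset.sum_sdiff hCL]
    have h4 : (∑ m ∈ C, if Λ <+: vote m then w m else 0) =
        ∑ m ∈ C.filter (fun m => Λ <+: vote m), w m :=
      (Finset.sum_filter _ _).symm
    have h5 : (∑ m ∈ L, w m) ≤ (3 / 2 : ℝ) * ∑ m ∈ C, w m := by nlinarith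
    have h1' := h1
    rw [Grade1] at h1'
    nlinarith [h1', hsplit, h2, h3, h4]
  have k1 := key L hCL hC Λ h1
  have k2 := key L' hCL' hC' Λ' h1'
  set S := C.filter (fun m => Λ <+: vote m) with hS
  set S' := C.filter (fun m => Λ' <+: vote m) with hS'
  have hne : (S ∩ S').Nonempty := by
    by_contra h
    rw [Finset.not_nonempty_iff_eq_empty] at h
    have hdisj : Disjoint S S' := Finset.disjoint_iff_inter_eq_empty.mpr h
    have hunion : (∑ m ∈ S, w m) + ∑ m ∈ S', w m = ∑ m ∈ S ∪ S', w m :=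
      (Finset.sum_union hdisj).symm
    have hsub : S ∪ S' ⊆ C := by
      apply Finset.union_subset <;> exact Finset.filter_subset _ _
    have hle : ∑ m ∈ S ∪ S', w m ≤ ∑ m ∈ C, w m :=
      Finset.sum_le_sum_of_subset_of_nonneg hsub (fun m _ _ => (hw m).le)
    nlinarith
  obtain ⟨m, hm⟩ := hne
  rw [Finset.mem_inter] at hm
  have p1 : Λ <+: vote m := (Finset.mem_filter.mp hm.1).2
  have p2 : Λ' <+: vote m := (Finset.mem_filter.mp hm.2).2
  rcases le_total Λ.length Λ'.length with h | h
  · exact Or.inl (List.prefix_of_prefix_length_le p1 p2 h)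
  · exact Or.inr (List.prefix_of_prefix_length_le p2 p1 h)
end

section
/- (Maximal grade-0 chains extend grade-1 chains.) Let C be a finite set of messages and let L and L' be finite sets of messages, all messages of strictly positive weight, with C ⊆ L, C ⊆ L', weight(C) > (2/3)·weight(L), and weight(C) > (2/3)·weight(L'), and assume that the votes of the messages in C are pairwise compatible. If a chain Λ has grade 1 at L and a chain Λ' is a maximal grade-0 chain at L', then Λ is a prefix of Λ'. -/
open scoped Classical

/-- A chain `Λ` has grade 0 at `L` if the votes for extensions of `Λ` account for strictly
more than one third of the weight of `L`. -/
def Grade0 {Msg B : Type*} (w : Msg → ℝ) (vote : Msg → List B)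
    (L : Finset Msg) (Λ : List B) : Prop :=
  (1 / 3 : ℝ) * ∑ m ∈ L, w m < extWeight w vote L Λ

/-- A chain `Λ` is a maximal grade-0 chain at `L` if it has grade 0 at `L` and no strict
extension of it has grade 0 at `L`. -/
def MaximalGrade0 {Msg B : Type*} (w : Msg → ℝ) (vote : Msg → List B)
    (L : Finset Msg) (Λ : List B) : Prop :=
  Grade0 w vote L Λ ∧ ∀ Λ' : List B, Λ <+: Λ' → Λ' ≠ Λ → ¬Grade0 w vote L Λ'

lemma extWeight_eq_filter {Msg B : Type*} [DecidableEq Msg] (w : Msg → ℝ) (vote : Msg → List B)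
    (L : Finset Msg) (Λ : List B) :
    extWeight w vote L Λ = ∑ m ∈ L.filter (fun m => Λ <+: vote m), w m := by
  rw [extWeight, Finset.sum_filter]

lemma filter_weight_lower {Msg B : Type*} [DecidableEq Msg] (w : Msg → ℝ) (vote : Msg → List B)
    (hw : ∀ m : Msg, 0 ≤ w m) (C L : Finset Msg) (hCL : C ⊆ L) (Λ : List B) :
    extWeight w vote L Λ + ∑ m ∈ C, w m ≤
      (∑ m ∈ L, w m) + ∑ m ∈ C.filter (fun m => Λ <+: vote m), w m := by
  rw [extWeight_eq_filter]
  have hinter : L.filter (fun m => Λ <+: vote m) ∩ C = C.filter (fun m => Λ <+: vote m) := by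
    ext m
    simp only [Finset.mem_inter, Finset.mem_filter]
    exact ⟨fun h => ⟨h.2, h.1.2⟩, fun h => ⟨⟨hCL h.1, h.2⟩, h.1⟩⟩
  have hsub : L.filter (fun m => Λ <+: vote m) ∪ C ⊆ L :=
    Finset.union_subset (Finset.filter_subset _ _) hCL
  have := Finset.sum_union_inter (s₁ := L.filter (fun m => Λ <+: vote m)) (s₂ := C) (f := w)
  rw [hinter] at this
  have hle : ∑ m ∈ L.filter (fun m => Λ <+: vote m) ∪ C, w m ≤ ∑ m ∈ L, w m :=
    Finset.sum_le_sum_of_subset_of_nonneg hsub (fun m _ _ => hw m)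
  linarith

/-- Maximal grade-0 chains extend grade-1 chains: with `C ⊆ L`, `C ⊆ L'`, `C` accounting for
strictly more than two thirds of the weight of both `L` and `L'`, and pairwise compatible
votes in `C`, every chain with grade 1 at `L` is a prefix of every maximal grade-0 chain
at `L'`. -/
theorem maximal_grade0_extends_grade1 {Msg B : Type*} [DecidableEq Msg]
    (w : Msg → ℝ) (vote : Msg → List B) (hw : ∀ m : Msg, 0 < w m)
    (C L L' : Finset Msg) (hCL : C ⊆ L) (hCL' : C ⊆ L')
    (hC : (2 / 3 : ℝ) * ∑ m ∈ L, w m < ∑ m ∈ C, w m)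
    (hC' : (2 / 3 : ℝ) * ∑ m ∈ L', w m < ∑ m ∈ C, w m)
    (hcomp : ∀ m ∈ C, ∀ m' ∈ C, vote m <+: vote m' ∨ vote m' <+: vote m)
    (Λ Λ' : List B)
    (h1 : Grade1 w vote L Λ) (h0 : MaximalGrade0 w vote L' Λ') :
    Λ <+: Λ' := by
  classical
  have hw' : ∀ m : Msg, 0 ≤ w m := fun m => (hw m).le
  -- the set of C-messages whose vote extends Λ
  set A := C.filter (fun m => Λ <+: vote m) with hA
  set Bset := C.filter (fun m => Λ' <+: vote m) with hB
  have hAL : extWeight w vote L Λ + ∑ m ∈ C, w m ≤ (∑ m ∈ L, w m) + ∑ m ∈ A, w m :=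
    filter_weight_lower w vote hw' C L hCL Λ
  have hBL : extWeight w vote L' Λ' + ∑ m ∈ C, w m ≤ (∑ m ∈ L', w m) + ∑ m ∈ Bset, w m :=
    filter_weight_lower w vote hw' C L' hCL' Λ'
  have hWL'nonneg : (0:ℝ) ≤ ∑ m ∈ L', w m := Finset.sum_nonneg fun m _ => hw' m
  -- A has large weight
  have hApos : (∑ m ∈ L', w m) / 3 < ∑ m ∈ A, w m := by
    have h1' := h1
    unfold Grade1 at h1'
    linarith
  have hAne : A.Nonempty := by
    rcases Finset.eq_empty_or_nonempty A with h | h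
    · rw [h] at hApos; simp at hApos
      have : (0:ℝ) < ∑ m ∈ C, w m := by linarith
      linarith
    · exact h
  have hBne : Bset.Nonempty := by
    rcases Finset.eq_empty_or_nonempty Bset with h | h
    · exfalso
      have h0' := h0.1
      unfold Grade0 at h0'
      rw [h] at hBL; simp at hBL
      linarith
    · exact h
  obtain ⟨m₀, hm₀⟩ := hAne
  obtain ⟨m₁, hm₁⟩ := hBne
  rw [hA, Finset.mem_filter] at hm₀
  rw [hB, Finset.mem_filter] at hm₁
  -- Λ and Λ' are comparable
  have hcompat : Λ <+: Λ' ∨ Λ' <+: Λ := by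
    rcases hcomp m₀ hm₀.1 m₁ hm₁.1 with h | h
    · exact List.prefix_or_prefix_of_prefix (hm₀.2.trans h) hm₁.2
    · exact List.prefix_or_prefix_of_prefix hm₀.2 (hm₁.2.trans h)
  rcases hcompat with h | h
  · exact h
  · by_cases heq : Λ = Λ'
    · exact heq ▸ List.prefix_rfl
    · exfalso
      apply h0.2 Λ h heq
      -- Λ has grade 0 at L'
      unfold Grade0
      have hAsub : A ⊆ L'.filter (fun m => Λ <+: vote m) := by
        intro m hm
        rw [hA, Finset.mem_filter] at hm
        rw [Finset.mem_filter]
        exact ⟨hCL' hm.1, hm.2⟩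
      have hle : ∑ m ∈ A, w m ≤ extWeight w vote L' Λ := by
        rw [extWeight_eq_filter]
        exact Finset.sum_le_sum_of_subset_of_nonneg hAsub (fun m _ _ => hw' m)
      linarith
end

section
/- (A chain with grade 1 at one node has grade 0 at every node.) Let C be a finite set of messages and let L and L' be finite sets of messages, all messages of strictly positive weight, with C ⊆ L, C ⊆ L', weight(C) > (2/3)·weight(L), and weight(C) > (2/3)·weight(L'). If a chain Λ has grade 1 at L, then Λ has grade 0 at L'. -/
open scoped Classical

/-- A chain with grade 1 at one node has grade 0 at every node: with `C ⊆ L`, `C ⊆ L'`, and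
`C` accounting for strictly more than two thirds of the weight of both `L` and `L'`, every
chain with grade 1 at `L` has grade 0 at `L'`. -/
theorem grade1_implies_grade0_everywhere {Msg B : Type*} [DecidableEq Msg]
    (w : Msg → ℝ) (vote : Msg → List B) (hw : ∀ m : Msg, 0 < w m)
    (C L L' : Finset Msg) (hCL : C ⊆ L) (hCL' : C ⊆ L')
    (hC : (2 / 3 : ℝ) * ∑ m ∈ L, w m < ∑ m ∈ C, w m)
    (hC' : (2 / 3 : ℝ) * ∑ m ∈ L', w m < ∑ m ∈ C, w m)
    (Λ : List B) (h1 : Grade1 w vote L Λ) :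
    Grade0 w vote L' Λ := by
  classical
  have hnn : ∀ (S : Finset Msg), 0 ≤ ∑ m ∈ S, (if Λ <+: vote m then w m else 0) := by
    intro S
    apply Finset.sum_nonneg
    intro m _
    split <;> [exact (hw m).le; rfl]
  -- weight of C
  have hwL : ∑ m ∈ L, w m = ∑ m ∈ C, w m + ∑ m ∈ L \ C, w m := by
    rw [← Finset.sum_sdiff hCL]; ring
  -- extWeight over L splits
  have hsplit : extWeight w vote L Λ
      = extWeight w vote C Λ + extWeight w vote (L \ C) Λ := by
    unfold extWeight
    rw [← Finset.sum_sdiff hCL]; ring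
  have hdiff : extWeight w vote (L \ C) Λ ≤ ∑ m ∈ L \ C, w m := by
    apply Finset.sum_le_sum
    intro m _
    split <;> [exact le_rfl; exact (hw m).le]
  have hCext : extWeight w vote L Λ - (∑ m ∈ L, w m - ∑ m ∈ C, w m)
      ≤ extWeight w vote C Λ := by
    rw [hwL, hsplit]; linarith
  have hmono : extWeight w vote C Λ ≤ extWeight w vote L' Λ := by
    unfold extWeight
    apply Finset.sum_le_sum_of_subset_of_nonneg hCL'
    intro m _ _
    split <;> [exact (hw m).le; rfl]
  have h1' := h1
  unfold Grade1 at h1'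
  unfold Grade0
  nlinarith [hCext, hmono, h1', hC, hC']
end

section
/- (Liveness key lemma.) Let C be a finite set of messages, let L be a nonempty finite set of messages with C ⊆ L and weight(C) > (2/3)·weight(L), and let (L_i)_{i ∈ I} be a finite family of finite sets of messages with C ⊆ L_i and weight(C) > (2/3)·weight(L_i) for every i ∈ I; all messages under consideration have strictly positive weight. For each i ∈ I, let Λ_i be a maximal grade-1 chain at L_i. Then there exists a maximal grade-0 chain Λ at L such that Λ_i is a prefix of Λ for every i ∈ I. -/
open scoped Classical

/-- A chain `Λ` is a maximal grade-1 chain at `L` if it has grade 1 at `L` and no strict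
extension of it has grade 1 at `L`. -/
def MaximalGrade1 {Msg B : Type*} (w : Msg → ℝ) (vote : Msg → List B)
    (L : Finset Msg) (Λ : List B) : Prop :=
  Grade1 w vote L Λ ∧ ∀ Λ' : List B, Λ <+: Λ' → Λ' ≠ Λ → ¬Grade1 w vote L Λ'


set_option linter.unusedSectionVars false

section Aux

variable {Msg B : Type*} [DecidableEq Msg]

lemma exists_mem_prefix (w : Msg → ℝ) (vote : Msg → List B)
    (hw : ∀ m, 0 < w m) (L : Finset Msg) (hL : L.Nonempty) (Λ : List B)
    (h : Grade0 w vote L Λ) : ∃ m ∈ L, Λ <+: vote m := by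
  by_contra hcon
  push_neg at hcon
  have hz : extWeight w vote L Λ = 0 :=
    Finset.sum_eq_zero (fun m hm => by simp [hcon m hm])
  have hpos : 0 < ∑ m ∈ L, w m := Finset.sum_pos (fun m _ => hw m) hL
  rw [Grade0, hz] at h
  nlinarith

lemma extWeight_mono_set (w : Msg → ℝ) (vote : Msg → List B) (hw : ∀ m, 0 < w m)
    {C L : Finset Msg} (hCL : C ⊆ L) (Λ : List B) :
    extWeight w vote C Λ ≤ extWeight w vote L Λ := by
  apply Finset.sum_le_sum_of_subset_of_nonneg hCL
  intro m _ _
  split_ifs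
  · exact (hw m).le
  · exact le_refl 0

lemma half_lemma (w : Msg → ℝ) (vote : Msg → List B) (hw : ∀ m, 0 < w m)
    {C Li : Finset Msg} (hCLi : C ⊆ Li)
    (hCi : (2 / 3 : ℝ) * ∑ m ∈ Li, w m < ∑ m ∈ C, w m)
    {Λ : List B} (hg : Grade1 w vote Li Λ) :
    (1 / 2 : ℝ) * ∑ m ∈ C, w m < extWeight w vote C Λ := by
  have hsplit : extWeight w vote (Li \ C) Λ + extWeight w vote C Λ = extWeight w vote Li Λ :=
    Finset.sum_sdiff hCLi
  have hsplit2 : (∑ m ∈ Li \ C, w m) + ∑ m ∈ C, w m = ∑ m ∈ Li, w m :=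
    Finset.sum_sdiff hCLi
  have hle : extWeight w vote (Li \ C) Λ ≤ ∑ m ∈ Li \ C, w m := by
    apply Finset.sum_le_sum
    intro m _
    split_ifs
    · exact le_refl _
    · exact (hw m).le
  rw [Grade1] at hg
  linarith

lemma compat_of_half (w : Msg → ℝ) (vote : Msg → List B) (hw : ∀ m, 0 < w m)
    (C : Finset Msg) {Λ1 Λ2 : List B}
    (h1 : (1 / 2 : ℝ) * ∑ m ∈ C, w m < extWeight w vote C Λ1)
    (h2 : (1 / 2 : ℝ) * ∑ m ∈ C, w m < extWeight w vote C Λ2) :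
    Λ1 <+: Λ2 ∨ Λ2 <+: Λ1 := by
  by_contra hcon
  push_neg at hcon
  have key : extWeight w vote C Λ1 + extWeight w vote C Λ2 ≤ ∑ m ∈ C, w m := by
    rw [extWeight, extWeight, ← Finset.sum_add_distrib]
    apply Finset.sum_le_sum
    intro m _
    by_cases ha : Λ1 <+: vote m <;> by_cases hb : Λ2 <+: vote m
    · rcases List.prefix_or_prefix_of_prefix ha hb with h | h
      · exact absurd h hcon.1
      · exact absurd h hcon.2
    all_goals simp [ha, hb, (hw m).le]
  linarith

lemma exists_maximal (w : Msg → ℝ) (vote : Msg → List B) (hw : ∀ m, 0 < w m)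
    (L : Finset Msg) (hL : L.Nonempty) :
    ∀ k (Λ : List B), Grade0 w vote L Λ →
      (L.sup fun m => (vote m).length) ≤ Λ.length + k →
      ∃ Λ', Λ <+: Λ' ∧ MaximalGrade0 w vote L Λ' := by
  intro k
  induction k with
  | zero =>
    intro Λ h hb
    refine ⟨Λ, List.prefix_refl _, h, ?_⟩
    intro Λ' hpre hne hg
    obtain ⟨m, hm, hpm⟩ := exists_mem_prefix w vote hw L hL Λ' hg
    have h1 : Λ'.length ≤ L.sup fun m => (vote m).length :=
      le_trans hpm.length_le (Finset.le_sup (f := fun m => (vote m).length) hm)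
    have h2 : Λ.length < Λ'.length := by
      rcases lt_or_eq_of_le hpre.length_le with h | h
      · exact h
      · exact absurd (hpre.eq_of_length h).symm hne
    omega
  | succ k ih =>
    intro Λ h hb
    by_cases hmax : ∀ Λ' : List B, Λ <+: Λ' → Λ' ≠ Λ → ¬Grade0 w vote L Λ'
    · exact ⟨Λ, List.prefix_refl _, h, hmax⟩
    · push_neg at hmax
      obtain ⟨Λ', hpre, hne, hg⟩ := hmax
      have h2 : Λ.length < Λ'.length := by
        rcases lt_or_eq_of_le hpre.length_le with h' | h'
        · exact h'
        · exact absurd (hpre.eq_of_length h').symm hne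
      obtain ⟨Λ'', h1, hmax''⟩ := ih Λ' hg (by omega)
      exact ⟨Λ'', hpre.trans h1, hmax''⟩

end Aux

/-- Liveness key lemma: let `C ⊆ L` with `L` nonempty and `weight C > (2/3) * weight L`, and
let `(Li i)` be a finite family of finite sets of messages, each containing `C`, in which `C`
accounts for strictly more than two thirds of the weight.  If `Λi i` is a maximal grade-1
chain at `Li i` for every `i`, then there exists a maximal grade-0 chain `Λ` at `L` such that
every `Λi i` is a prefix of `Λ`. -/
theorem liveness_key {Msg B : Type*} [DecidableEq Msg] {I : Type*} [Fintype I]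
    (w : Msg → ℝ) (vote : Msg → List B) (hw : ∀ m : Msg, 0 < w m)
    (C L : Finset Msg) (hL : L.Nonempty) (hCL : C ⊆ L)
    (hC : (2 / 3 : ℝ) * ∑ m ∈ L, w m < ∑ m ∈ C, w m)
    (Li : I → Finset Msg) (hCLi : ∀ i : I, C ⊆ Li i)
    (hCi : ∀ i : I, (2 / 3 : ℝ) * ∑ m ∈ Li i, w m < ∑ m ∈ C, w m)
    (Λi : I → List B) (hΛi : ∀ i : I, MaximalGrade1 w vote (Li i) (Λi i)) :
    ∃ Λ : List B, MaximalGrade0 w vote L Λ ∧ ∀ i : I, Λi i <+: Λ := by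
  have hLpos : 0 < ∑ m ∈ L, w m := Finset.sum_pos (fun m _ => hw m) hL
  rcases isEmpty_or_nonempty I with hI | hI
  · -- no constraints: start from the empty chain
    have hnil : Grade0 w vote L ([] : List B) := by
      have : extWeight w vote L ([] : List B) = ∑ m ∈ L, w m := by
        apply Finset.sum_congr rfl
        intro m _
        simp [List.nil_prefix]
      rw [Grade0, this]
      linarith
    obtain ⟨Λ, _, hmax⟩ := exists_maximal w vote hw L hL
      (L.sup fun m => (vote m).length) [] hnil (by omega)
    exact ⟨Λ, hmax, fun i => isEmptyElim i⟩
  · have hhalf : ∀ i, (1 / 2 : ℝ) * ∑ m ∈ C, w m < extWeight w vote C (Λi i) :=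
      fun i => half_lemma w vote hw (hCLi i) (hCi i) (hΛi i).1
    obtain ⟨i0, _, hi0⟩ := Finset.exists_max_image Finset.univ
      (fun i => (Λi i).length) ⟨hI.some, Finset.mem_univ _⟩
    have hprefix : ∀ i, Λi i <+: Λi i0 := by
      intro i
      rcases compat_of_half w vote hw C (hhalf i) (hhalf i0) with h | h
      · exact h
      · rw [h.eq_of_length (le_antisymm h.length_le (hi0 i (Finset.mem_univ _)))]
    have hg0 : Grade0 w vote L (Λi i0) := by
      have h1 : extWeight w vote C (Λi i0) ≤ extWeight w vote L (Λi i0) :=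
        extWeight_mono_set w vote hw hCL _
      rw [Grade0]
      have := hhalf i0
      linarith
    obtain ⟨Λ, hpre, hmax⟩ := exists_maximal w vote hw L hL
      (L.sup fun m => (vote m).length) (Λi i0) hg0 (by omega)
    exact ⟨Λ, hmax, fun i => (hprefix i).trans hpre⟩
end
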